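/- arXiv:0912.5264 — 4 statements merged into one kernel-verified Lean document; each statement's English description precedes it below -/
import Mathlib

section
/- Assume the Setup. Let i, j, k, l be distinct elements of {1,…,5}. Then it is impossible that simultaneously some w ∈ W is a witness of type {j,l} to the nonstable intersection of H(h^(i)) and H(h^(k)), and some w' ∈ W is a witness of type {k,l} to the nonstable intersection of H(h^(i)) and H(h^(j)). -/
noncomputable section

/-- The type of `w` with respect to `h`: the set of indices at which the minimum of
`h i + w i` is attained. -/
def typeSet (h w : Fin 5 → ℝ) : Set (Fin 5) :=
  {i | ∀ j, h i + w i ≤ h j + w j}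

/-- `h` is an `s`-coordinate hyperplane for `W`: every `w ∈ W` lies on the tropical
hyperplane `H(h)` (its type has at least two elements) and `s` is not in its type. -/
def IsCoordHyp (s : Fin 5) (h : Fin 5 → ℝ) (W : Finset (Fin 5 → ℝ)) : Prop :=
  ∀ w ∈ W, (∃ i j : Fin 5, i ≠ j ∧ i ∈ typeSet h w ∧ j ∈ typeSet h w) ∧ s ∉ typeSet h w

/-- The Setup: `W ⊆ ℝ^5` is finite, for each `s` the vector `H s` is an `s`-coordinate
hyperplane for `W`, and for every pair `s < t` some point of `W` witnesses the nonstable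
intersection of `H(H s)` and `H(H t)`, i.e. has the same two-element type with respect
to both. -/
def Setup (W : Finset (Fin 5 → ℝ)) (H : Fin 5 → Fin 5 → ℝ) : Prop :=
  (∀ s : Fin 5, IsCoordHyp s (H s) W) ∧
  ∀ s t : Fin 5, s < t → ∃ w ∈ W, ∃ a b : Fin 5, a ≠ b ∧
    typeSet (H s) w = {a, b} ∧ typeSet (H t) w = {a, b}

lemma type_mem_le {h u : Fin 5 → ℝ} {x y : Fin 5} (ht : typeSet h u = {x, y}) :
    ∀ z, h x + u x ≤ h z + u z := by
  have hx : x ∈ typeSet h u := by rw [ht]; exact Set.mem_insert _ _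
  exact hx

lemma type_eq' {h u : Fin 5 → ℝ} {x y : Fin 5} (ht : typeSet h u = {x, y}) :
    h x + u x = h y + u y := by
  have hy : y ∈ typeSet h u := by rw [ht]; exact Set.mem_insert_iff.mpr (Or.inr rfl)
  exact le_antisymm (type_mem_le ht y) (hy x)

lemma type_lt' {h u : Fin 5 → ℝ} {x y : Fin 5} (ht : typeSet h u = {x, y})
    (z : Fin 5) (hzx : z ≠ x) (hzy : z ≠ y) : h x + u x < h z + u z := by
  have hz : z ∉ typeSet h u := by rw [ht]; simp [hzx, hzy]
  have hx := type_mem_le ht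
  by_contra hcon
  push_neg at hcon
  exact hz (fun t => le_trans hcon (hx t))

/-- If `u` lies on `H(h)` (type has two elements), `j` is not in its type, and the value
at `k` strictly dominates the value at `l`, then the minimum value at `l` is weakly
dominated by the value at `i` or at `m`. -/
lemma small_aux (h u : Fin 5 → ℝ) (i j k l m : Fin 5)
    (hall : ∀ x : Fin 5, x = i ∨ x = j ∨ x = k ∨ x = l ∨ x = m)
    (h2 : ∃ p q : Fin 5, p ≠ q ∧ p ∈ typeSet h u ∧ q ∈ typeSet h u)
    (hj : j ∉ typeSet h u)
    (hk : h l + u l < h k + u k) :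
    (h i + u i ≤ h l + u l) ∨ (h m + u m ≤ h l + u l) := by
  obtain ⟨p, q, hpq, hp, hq⟩ := h2
  have key : ∀ r : Fin 5, r ∈ typeSet h u → r ≠ l →
      (h i + u i ≤ h l + u l) ∨ (h m + u m ≤ h l + u l) := by
    intro r hr hrl
    have hle : ∀ z, h r + u r ≤ h z + u z := hr
    rcases hall r with rfl | rfl | rfl | rfl | rfl
    · exact Or.inl (hle l)
    · exact absurd hr hj
    · exact absurd (hle l) (not_le.mpr hk)
    · exact absurd rfl hrl
    · exact Or.inr (hle l)
  by_cases hpl : p = l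
  · exact key q hq (by rw [← hpl]; exact hpq.symm)
  · exact key p hp hpl

/-- Variant: if `i` is excluded from the type and both `j` and `k` strictly dominate
the value at `l`, then `m` weakly undercuts `l`. -/
lemma small_aux2 (h u : Fin 5 → ℝ) (i j k l m : Fin 5)
    (hall : ∀ x : Fin 5, x = i ∨ x = j ∨ x = k ∨ x = l ∨ x = m)
    (hi : i ∉ typeSet h u)
    (h2 : ∃ p q : Fin 5, p ≠ q ∧ p ∈ typeSet h u ∧ q ∈ typeSet h u)
    (hj : h l + u l < h j + u j) (hk : h l + u l < h k + u k) :
    h m + u m ≤ h l + u l := by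
  obtain ⟨p, q, hpq, hp, hq⟩ := h2
  have key : ∀ r : Fin 5, r ∈ typeSet h u → r ≠ l → h m + u m ≤ h l + u l := by
    intro r hr hrl
    have hle : ∀ z, h r + u r ≤ h z + u z := hr
    rcases hall r with rfl | rfl | rfl | rfl | rfl
    · exact absurd hr hi
    · exact absurd (hle l) (not_le.mpr hj)
    · exact absurd (hle l) (not_le.mpr hk)
    · exact absurd rfl hrl
    · exact hle l
  by_cases hpl : p = l
  · exact key q hq (by rw [← hpl]; exact hpq.symm)
  · exact key p hp hpl

/-- Lemma 3.5: under the Setup, for distinct indices `i,j,k,l` it is impossible that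
some `w ∈ W` is a witness of type `{j,l}` to the nonstable intersection of `H(h⁽ⁱ⁾)` and
`H(h⁽ᵏ⁾)` while some `w' ∈ W` is a witness of type `{k,l}` to the nonstable intersection
of `H(h⁽ⁱ⁾)` and `H(h⁽ʲ⁾)`. -/
theorem no_conflicting_witnesses (W : Finset (Fin 5 → ℝ)) (H : Fin 5 → Fin 5 → ℝ)
    (hset : Setup W H) (i j k l : Fin 5)
    (hij : i ≠ j) (hik : i ≠ k) (hil : i ≠ l)
    (hjk : j ≠ k) (hjl : j ≠ l) (hkl : k ≠ l) :
    ¬ ((∃ w ∈ W, typeSet (H i) w = {j, l} ∧ typeSet (H k) w = {j, l}) ∧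
       (∃ w' ∈ W, typeSet (H i) w' = {k, l} ∧ typeSet (H j) w' = {k, l})) := by
  rintro ⟨⟨w, hwW, hwi, hwk⟩, ⟨w', hw'W, hw'i, hw'j⟩⟩
  obtain ⟨hcoord, hpair⟩ := hset
  -- construct the fifth index m
  have hcard : ({i, j, k, l} : Finset (Fin 5)).card = 4 := by
    rw [Finset.card_insert_of_notMem (by simp [hij, hik, hil]),
        Finset.card_insert_of_notMem (by simp [hjk, hjl]),
        Finset.card_insert_of_notMem (by simp [hkl]), Finset.card_singleton]
  have hcompl : (({i, j, k, l} : Finset (Fin 5))ᶜ).card = 1 := by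
    rw [Finset.card_compl, hcard]
    decide
  obtain ⟨m, hm⟩ := Finset.card_eq_one.mp hcompl
  have hmmem : m ∈ (({i, j, k, l} : Finset (Fin 5))ᶜ) := by
    rw [hm]; exact Finset.mem_singleton_self m
  have hmne : ¬ (m = i ∨ m = j ∨ m = k ∨ m = l) := by
    simpa [Finset.mem_compl, Finset.mem_insert] using hmmem
  push_neg at hmne
  obtain ⟨hmi, hmj, hmk, hml⟩ := hmne
  have hall : ∀ x : Fin 5, x = i ∨ x = j ∨ x = k ∨ x = l ∨ x = m := by
    intro x
    by_cases hx : x ∈ ({i, j, k, l} : Finset (Fin 5))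
    · simp only [Finset.mem_insert, Finset.mem_singleton] at hx
      tauto
    · have hx' : x ∈ (({i, j, k, l} : Finset (Fin 5))ᶜ) := Finset.mem_compl.mpr hx
      rw [hm, Finset.mem_singleton] at hx'
      tauto
  -- basic real facts from the two witnesses
  have eqA : H i j + w j = H i l + w l := type_eq' hwi
  have sA_k : H i j + w j < H i k + w k := type_lt' hwi k hjk.symm hkl
  have sA_m : H i j + w j < H i m + w m := type_lt' hwi m hmj hml
  have eqK : H k j + w j = H k l + w l := type_eq' hwk
  have sK_i : H k j + w j < H k i + w i := type_lt' hwk i hij hil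
  have sK_m : H k j + w j < H k m + w m := type_lt' hwk m hmj hml
  have eqB : H i k + w' k = H i l + w' l := type_eq' hw'i
  have sB_j : H i k + w' k < H i j + w' j := type_lt' hw'i j hjk hjl
  have eqJk : H j k + w' k = H j l + w' l := type_eq' hw'j
  have sJ'_i : H j k + w' k < H j i + w' i := type_lt' hw'j i hik hil
  have sJ'_m : H j k + w' k < H j m + w' m := type_lt' hw'j m hmk hml
  -- coordinate-hyperplane facts for w and w'
  obtain ⟨h2w, hjw⟩ := hcoord j w hwW
  obtain ⟨h2w', hkw'⟩ := hcoord k w' hw'W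
  have F1 : H j l + w l < H j k + w k := by linarith [eqJk, eqB, sA_k, eqA]
  have F2 : H k l + w' l < H k j + w' j := by linarith [eqK, eqA, sB_j, eqB]
  have smallW : (H j i + w i ≤ H j l + w l) ∨ (H j m + w m ≤ H j l + w l) :=
    small_aux (H j) w i j k l m hall h2w hjw F1
  have hall' : ∀ x : Fin 5, x = i ∨ x = k ∨ x = j ∨ x = l ∨ x = m := by
    intro x
    rcases hall x with h | h | h | h | h
    exacts [Or.inl h, Or.inr (Or.inr (Or.inl h)), Or.inr (Or.inl h),
      Or.inr (Or.inr (Or.inr (Or.inl h))), Or.inr (Or.inr (Or.inr (Or.inr h)))]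
  have smallW' : (H k i + w' i ≤ H k l + w' l) ∨ (H k m + w' m ≤ H k l + w' l) :=
    small_aux (H k) w' i k j l m hall' h2w' hkw' F2
  -- the main argument, using a witness for the pair (j,k)
  have key : ∀ w'' ∈ W, ∀ a b : Fin 5, a ≠ b → typeSet (H j) w'' = {a, b} →
      typeSet (H k) w'' = {a, b} → False := by
    intro w'' hw''W a b hab htJ htK
    obtain ⟨h2w'', hiw''⟩ := hcoord i w'' hw''W
    have hjw'' : j ∉ typeSet (H j) w'' := (hcoord j w'' hw''W).2
    have hkw'' : k ∉ typeSet (H k) w'' := (hcoord k w'' hw''W).2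
    have haJ : a ∈ typeSet (H j) w'' := by rw [htJ]; exact Set.mem_insert _ _
    have hbJ : b ∈ typeSet (H j) w'' := by
      rw [htJ]; exact Set.mem_insert_iff.mpr (Or.inr rfl)
    have haK : a ∈ typeSet (H k) w'' := by rw [htK]; exact Set.mem_insert _ _
    have hbK : b ∈ typeSet (H k) w'' := by
      rw [htK]; exact Set.mem_insert_iff.mpr (Or.inr rfl)
    have haj : a ≠ j := fun h => hjw'' (h ▸ haJ)
    have hak : a ≠ k := fun h => hkw'' (h ▸ haK)
    have hbj : b ≠ j := fun h => hjw'' (h ▸ hbJ)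
    have hbk : b ≠ k := fun h => hkw'' (h ▸ hbK)
    have ha3 : a = i ∨ a = l ∨ a = m := by
      rcases hall a with h | h | h | h | h
      exacts [Or.inl h, absurd h haj, absurd h hak, Or.inr (Or.inl h), Or.inr (Or.inr h)]
    have hb3 : b = i ∨ b = l ∨ b = m := by
      rcases hall b with h | h | h | h | h
      exacts [Or.inl h, absurd h hbj, absurd h hbk, Or.inr (Or.inl h), Or.inr (Or.inr h)]
    -- the three closing arguments
    have closeLM : (H j l + w'' l = H j m + w'' m) →
        (H k l + w'' l = H k m + w'' m) → False := by
      intro eqJ'' eqK''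
      have vm : H j l + w l < H j m + w m := by linarith
      have um : H k l + w' l < H k m + w' m := by linarith
      have hWl : H j i + w i ≤ H j l + w l := smallW.resolve_right (not_le.mpr vm)
      have hW'l : H k i + w' i ≤ H k l + w' l := smallW'.resolve_right (not_le.mpr um)
      linarith
    have closeIL : (H j i + w'' i = H j l + w'' l) →
        (H j i + w'' i < H j m + w'' m) → (H j i + w'' i < H j k + w'' k) →
        (H k i + w'' i = H k l + w'' l) → (H k i + w'' i < H k j + w'' j) → False := by
      intro eqJ'' sJ''m sJ''k eqK'' sK''j
      have vi : H j l + w l < H j i + w i := by linarith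
      have vm_le : H j m + w m ≤ H j l + w l := smallW.resolve_left (not_le.mpr vi)
      have tj : H i l + w'' l < H i j + w'' j := by linarith
      have tk : H i l + w'' l < H i k + w'' k := by linarith
      have tm : H i m + w'' m ≤ H i l + w'' l :=
        small_aux2 (H i) w'' i j k l m hall hiw'' h2w'' tj tk
      linarith
    have closeIM : (H j i + w'' i = H j m + w'' m) →
        (H k i + w'' i = H k m + w'' m) → False := by
      intro eqJ'' eqK''
      rcases smallW with h1 | h1 <;> rcases smallW' with h2 | h2 <;> linarith
    rcases ha3 with ha | ha | ha <;> rcases hb3 with hb | hb | hb <;>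
        rw [ha, hb] at htJ htK
    · exact hab (ha.trans hb.symm)
    · exact closeIL (type_eq' htJ) (type_lt' htJ m hmi hml) (type_lt' htJ k hik.symm hkl)
        (type_eq' htK) (type_lt' htK j hij.symm hjl)
    · exact closeIM (type_eq' htJ) (type_eq' htK)
    · exact closeIL (type_eq' htJ).symm (by linarith [type_eq' htJ, type_lt' htJ m hml hmi])
        (by linarith [type_eq' htJ, type_lt' htJ k hkl hik.symm])
        (type_eq' htK).symm (by linarith [type_eq' htK, type_lt' htK j hjl hij.symm])
    · exact hab (ha.trans hb.symm)
    · exact closeLM (type_eq' htJ) (type_eq' htK)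
    · exact closeIM (type_eq' htJ).symm (type_eq' htK).symm
    · exact closeLM (type_eq' htJ).symm (type_eq' htK).symm
    · exact hab (ha.trans hb.symm)
  rcases lt_trichotomy j k with h | h | h
  · obtain ⟨w'', hW, a, b, hab, h1, h2⟩ := hpair j k h
    exact key w'' hW a b hab h1 h2
  · exact hjk h
  · obtain ⟨w'', hW, a, b, hab, h1, h2⟩ := hpair k j h
    exact key w'' hW a b hab h2 h1
end
end

section
/- Let A be a 5×n real matrix all of whose 4×4 submatrices are tropically singular. Then for each i ∈ {1,…,5} there exists h ∈ ℝ^5 which is an i-coordinate hyperplane for the set of column vectors of A; that is, for every column w of A, the minimum over j of (h_j + w_j) is attained at least twice and is not attained at index i. -/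
/-!
Deleting row `i` leaves a `4 × n` matrix all of whose `4 × 4` minors are tropically singular.
The columns of a singular square matrix lie on a common tropical hyperplane, whose coefficients
are the tropical minors along a row where two optimal permutations differ (tropical Laplace
expansion). A tropical Helly argument, whose combination step is tropical Cramer's rule, extends
this from every four columns to all of them. Finally, a large `i`-th coefficient keeps every
minimum away from `i`.
-/

noncomputable section

/-- An `m × m` real matrix is tropically singular if the minimum over all permutations `σ`
of `∑ i, M i (σ i)` is attained by at least two distinct permutations. -/
def TropSingular {m : ℕ} (M : Matrix (Fin m) (Fin m) ℝ) : Prop :=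
  ∃ σ τ : Equiv.Perm (Fin m), σ ≠ τ ∧
    (∑ i, M i (σ i)) = (∑ i, M i (τ i)) ∧
    ∀ ρ : Equiv.Perm (Fin m), (∑ i, M i (σ i)) ≤ ∑ i, M i (ρ i)

open Function Matrix

def tropHyperplane {ι : Type*} (g : ι → ℝ) : Set (ι → ℝ) :=
  {w | ∃ a b, a ≠ b ∧ (∀ j, g a + w a ≤ g j + w j) ∧ ∀ j, g b + w b ≤ g j + w j}

section FiberwiseMin

variable {P κ : Type*}

lemma exists_fiberwise_min [Finite P] (f : P → κ) (hf : Surjective f) (F : P → ℝ) :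
    ∃ lam : κ → ℝ, (∀ p, lam (f p) ≤ F p) ∧ ∀ k, ∃ p, f p = k ∧ F p = lam k := by
  have hmin : ∀ k, ∃ p, f p = k ∧ ∀ q, f q = k → F p ≤ F q := by
    intro k
    have : Nonempty {q // f q = k} := let ⟨q, hq⟩ := hf k; ⟨⟨q, hq⟩⟩
    obtain ⟨⟨p, hp⟩, hpmin⟩ := Finite.exists_min fun q : {q // f q = k} => F q
    exact ⟨p, hp, fun q hq => hpmin ⟨q, hq⟩⟩
  choose p hpk hpmin using hmin
  exact ⟨fun k => F (p k), fun q => hpmin _ q rfl, fun k => ⟨p k, hpk k, rfl⟩⟩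

/-- `min_k (lam k + v k)` is the minimum of `F + v ∘ f`, so it is attained at `f p` for every
global minimiser `p`. -/
lemma mem_tropHyperplane_of_fiberwise_min (f : P → κ) (F : P → ℝ) (lam : κ → ℝ)
    (hle : ∀ p, lam (f p) ≤ F p) (hatt : ∀ k, ∃ p, f p = k ∧ F p = lam k) (v : κ → ℝ)
    {p q : P} (hpq : f p ≠ f q) (hp : ∀ r, F p + v (f p) ≤ F r + v (f r))
    (hq : ∀ r, F q + v (f q) ≤ F r + v (f r)) : v ∈ tropHyperplane lam := by
  have attains : ∀ p, (∀ r, F p + v (f p) ≤ F r + v (f r)) →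
      ∀ k, lam (f p) + v (f p) ≤ lam k + v k := by
    intro p hp k
    obtain ⟨r, rfl, hr⟩ := hatt k
    linarith [hle p, hp r]
  exact ⟨f p, f q, hpq, attains p hp, attains q hq⟩

end FiberwiseMin

section Laplace

variable {ι : Type*} [Fintype ι]

def IsMinPerm (M : Matrix ι ι ℝ) (σ : Equiv.Perm ι) : Prop :=
  ∀ ρ : Equiv.Perm ι, ∑ i, M i (σ i) ≤ ∑ i, M i (ρ i)

lemma exists_isMinPerm (M : Matrix ι ι ℝ) : ∃ σ, IsMinPerm M σ :=
  Finite.exists_min fun σ : Equiv.Perm ι => ∑ i, M i (σ i)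

variable [DecidableEq ι]

lemma sum_updateRow_apply (X : Matrix ι ι ℝ) (r : ι) (v : ι → ℝ) (σ : Equiv.Perm ι) :
    ∑ s, X.updateRow r v s (σ s) = ∑ s ∈ Finset.univ.erase r, X s (σ s) + v (σ r) := by
  rw [← Finset.sum_erase_add _ _ (Finset.mem_univ r), Matrix.updateRow_self]
  congr 1
  exact Finset.sum_congr rfl fun s hs => by rw [Matrix.updateRow_ne (Finset.ne_of_mem_erase hs)]

lemma isMinPerm_mul_swap {Y : Matrix ι ι ℝ} {i r : ι} (hY : Y i = Y r) {σ : Equiv.Perm ι}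
    (hσ : IsMinPerm Y σ) : IsMinPerm Y (σ * Equiv.swap i r) := by
  have hswap : ∀ s, Y (Equiv.swap i r s) = Y s := by
    intro s
    rcases eq_or_ne s i with rfl | hsi
    · rw [Equiv.swap_apply_left, hY]
    rcases eq_or_ne s r with rfl | hsr
    · rw [Equiv.swap_apply_right, hY]
    · rw [Equiv.swap_apply_of_ne_of_ne hsi hsr]
  intro ρ
  calc ∑ s, Y s ((σ * Equiv.swap i r) s)
      = ∑ s, Y (Equiv.swap i r s) (σ (Equiv.swap i r s)) := by
        simp only [Equiv.Perm.mul_apply, hswap]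
    _ = ∑ s, Y s (σ s) := Equiv.sum_comp (Equiv.swap i r) fun s => Y s (σ s)
    _ ≤ ∑ s, Y s (ρ s) := hσ ρ

/-- Tropical Laplace expansion along row `r`: `lam k` is the tropical minor of `X` obtained by
deleting row `r` and column `k`. -/
theorem exists_tropHyperplane_of_updateRow (X : Matrix ι ι ℝ) (r : ι) :
    ∃ lam : ι → ℝ, ∀ (v : ι → ℝ) (σ τ : Equiv.Perm ι), σ r ≠ τ r →
      IsMinPerm (X.updateRow r v) σ → IsMinPerm (X.updateRow r v) τ → v ∈ tropHyperplane lam := by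
  have hsurj : Surjective fun σ : Equiv.Perm ι => σ r :=
    fun k => ⟨Equiv.swap r k, Equiv.swap_apply_left r k⟩
  obtain ⟨lam, hle, hatt⟩ :=
    exists_fiberwise_min _ hsurj fun σ => ∑ s ∈ Finset.univ.erase r, X s (σ s)
  refine ⟨lam, fun v σ τ hστ hσ hτ => ?_⟩
  simp only [IsMinPerm, sum_updateRow_apply] at hσ hτ
  exact mem_tropHyperplane_of_fiberwise_min _ _ lam hle hatt v hστ hσ hτ

theorem exists_forall_ne_mem_tropHyperplane (X : Matrix ι ι ℝ) (r : ι) :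
    ∃ lam : ι → ℝ, (∀ i ≠ r, X i ∈ tropHyperplane lam) ∧
      ∀ σ τ : Equiv.Perm ι, σ r ≠ τ r → IsMinPerm X σ → IsMinPerm X τ →
        X r ∈ tropHyperplane lam := by
  obtain ⟨lam, hlam⟩ := exists_tropHyperplane_of_updateRow X r
  refine ⟨lam, fun i hir => ?_, fun σ τ hστ hσ hτ => ?_⟩
  · obtain ⟨σ, hσ⟩ := exists_isMinPerm (X.updateRow r (X i))
    have hrows : X.updateRow r (X i) i = X.updateRow r (X i) r := by
      rw [Matrix.updateRow_ne hir, Matrix.updateRow_self]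
    refine hlam _ σ (σ * Equiv.swap i r) ?_ hσ (isMinPerm_mul_swap hrows hσ)
    simpa [Equiv.swap_apply_right] using σ.injective.ne hir.symm
  · rw [← Matrix.updateRow_eq_self X r] at hσ hτ
    exact hlam _ σ τ hστ hσ hτ

theorem exists_forall_mem_tropHyperplane_of_rows_eq (X : Matrix ι ι ℝ) {a b : ι} (hab : a ≠ b)
    (h : X a = X b) : ∃ lam : ι → ℝ, ∀ i, X i ∈ tropHyperplane lam := by
  obtain ⟨lam, hlam, -⟩ := exists_forall_ne_mem_tropHyperplane X a
  refine ⟨lam, fun i => ?_⟩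
  rcases eq_or_ne i a with rfl | hia
  · exact h ▸ hlam b hab.symm
  · exact hlam i hia

end Laplace

theorem TropSingular.transpose {m : ℕ} {M : Matrix (Fin m) (Fin m) ℝ} (h : TropSingular M) :
    TropSingular Mᵀ := by
  have hsum : ∀ σ : Equiv.Perm (Fin m), ∑ i, Mᵀ i (σ⁻¹ i) = ∑ i, M i (σ i) := fun σ =>
    (Equiv.sum_comp σ _).symm.trans (by simp)
  obtain ⟨σ, τ, hne, heq, hmin⟩ := h
  refine ⟨σ⁻¹, τ⁻¹, inv_injective.ne hne, by rw [hsum, hsum, heq], fun ρ => ?_⟩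
  have := hmin ρ⁻¹
  rwa [← hsum σ, ← hsum ρ⁻¹, inv_inv] at this

theorem TropSingular.exists_forall_mem_tropHyperplane {m : ℕ} {X : Matrix (Fin m) (Fin m) ℝ}
    (h : TropSingular X) : ∃ lam : Fin m → ℝ, ∀ i, X i ∈ tropHyperplane lam := by
  obtain ⟨σ, τ, hne, heq, hmin⟩ := h
  obtain ⟨r, hr⟩ : ∃ r, σ r ≠ τ r := not_forall.mp fun h => hne (Equiv.ext h)
  obtain ⟨lam, hrows, hrow⟩ := exists_forall_ne_mem_tropHyperplane X r
  refine ⟨lam, fun i => ?_⟩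
  rcases eq_or_ne i r with rfl | hir
  · exact hrow σ τ hr hmin fun ρ => heq ▸ hmin ρ
  · exact hrows i hir

section Helly

variable {ι : Type*} [Fintype ι] [DecidableEq ι] [Nonempty ι]

/-- Tropical Helly step: a tropical Cramer vector `lam` of the `|ι| × (|ι| + 1)` matrix
`(x k i)` combines the hyperplanes `x k` into `g i = min_k (lam k + x k i)`. -/
theorem exists_tropHyperplane_of_leave_one_out {J : Type*} (p : J → ι → ℝ) (ℓ : Option ι → J)
    (hℓ : Injective ℓ) (x : Option ι → ι → ℝ)
    (hx : ∀ k j, j ≠ ℓ k → p j ∈ tropHyperplane (x k)) :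
    ∃ g : ι → ℝ, ∀ j, p j ∈ tropHyperplane g := by
  obtain ⟨lam, hlam, -⟩ := exists_forall_ne_mem_tropHyperplane
    (fun o : Option ι => o.elim 0 fun i k => x k i) none
  have hrows : ∀ i, (fun k => x k i) ∈ tropHyperplane lam :=
    fun i => hlam (some i) (Option.some_ne_none i)
  choose a b hab ha hb using hrows
  refine ⟨fun i => lam (a i) + x (a i) i, fun j => ?_⟩
  obtain ⟨i₀, hi₀⟩ := Finite.exists_min fun i => lam (a i) + x (a i) i + p j i
  obtain ⟨k, hkj, hk⟩ : ∃ k, ℓ k ≠ j ∧ lam k + x k i₀ ≤ lam (a i₀) + x (a i₀) i₀ := by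
    by_cases haj : ℓ (a i₀) = j
    · exact ⟨b i₀, fun hbj => hab i₀ (hℓ (haj.trans hbj.symm)), hb i₀ (a i₀)⟩
    · exact ⟨a i₀, haj, le_rfl⟩
  obtain ⟨c, d, hcd, hc, hd⟩ := hx k j hkj.symm
  have hmin : ∀ c, (∀ i, x k c + p j c ≤ x k i + p j i) →
      ∀ i, lam (a c) + x (a c) c + p j c ≤ lam (a i) + x (a i) i + p j i := by
    intro c hc i
    linarith [ha c k, hc i₀, hi₀ i]
  exact ⟨c, d, hcd, hmin c hc, hmin d hd⟩

theorem exists_tropHyperplane_of_forall_comp (n : ℕ) (p : Fin n → ι → ℝ)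
    (hp : ∀ c : ι → Fin n, ∃ g : ι → ℝ, ∀ k, p (c k) ∈ tropHyperplane g) :
    ∃ g : ι → ℝ, ∀ j, p j ∈ tropHyperplane g := by
  induction n with
  | zero => exact ⟨0, fun j => j.elim0⟩
  | succ n ih =>
    by_cases hn : n + 1 ≤ Fintype.card ι
    · obtain ⟨e⟩ : Nonempty (Fin (n + 1) ↪ ι) :=
        Function.Embedding.nonempty_of_card_le (by simpa using hn)
      obtain ⟨g, hg⟩ := hp (invFun e)
      refine ⟨g, fun j => ?_⟩
      obtain ⟨k, rfl⟩ := invFun_surjective e.injective j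
      exact hg k
    · obtain ⟨ℓ⟩ : Nonempty (Option ι ↪ Fin (n + 1)) :=
        Function.Embedding.nonempty_of_card_le (by simp; omega)
      have hx : ∀ k, ∃ g : ι → ℝ, ∀ j, j ≠ ℓ k → p j ∈ tropHyperplane g := by
        intro k
        obtain ⟨g, hg⟩ := ih (fun j => p ((ℓ k).succAbove j))
          fun c => hp fun i => (ℓ k).succAbove (c i)
        refine ⟨g, fun j hj => ?_⟩
        obtain ⟨j', rfl⟩ := Fin.exists_succAbove_eq hj
        exact hg j'
      choose x hx using hx
      exact exists_tropHyperplane_of_leave_one_out p ℓ ℓ.injective x hx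

end Helly

theorem exists_insertNth_tropHyperplane {m : ℕ} {J : Type*} [Finite J] (p : J → Fin (m + 1) → ℝ)
    (i : Fin (m + 1)) (g : Fin m → ℝ)
    (hg : ∀ j, (fun k => p j (i.succAbove k)) ∈ tropHyperplane g) :
    ∃ h : Fin (m + 1) → ℝ, ∀ j, p j ∈ tropHyperplane h ∧ ∃ k, h k + p j k < h i + p j i := by
  obtain ⟨M, hM⟩ := Finite.bddAbove_range fun jk : J × Fin m =>
    g jk.2 + p jk.1 (i.succAbove jk.2) - p jk.1 i
  have hbig : ∀ j k, g k + p j (i.succAbove k) < M + 1 + p j i := fun j k => by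
    linarith [hM ⟨(j, k), rfl⟩]
  obtain ⟨h, hi, hsa⟩ : ∃ h : Fin (m + 1) → ℝ, h i = M + 1 ∧ ∀ k, h (i.succAbove k) = g k :=
    ⟨i.insertNth (M + 1) g, Fin.insertNth_apply_same _ _ _, Fin.insertNth_apply_succAbove _ _ _⟩
  refine ⟨h, fun j => ?_⟩
  have hmin : ∀ a, (∀ k, g a + p j (i.succAbove a) ≤ g k + p j (i.succAbove k)) →
      ∀ k, h (i.succAbove a) + p j (i.succAbove a) ≤ h k + p j k := by
    intro a ha
    refine (Fin.forall_iff_succAbove i).mpr ⟨?_, fun k => ?_⟩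
    · rw [hi, hsa]
      exact (hbig j a).le
    · simpa only [hsa] using ha k
  obtain ⟨a, b, hab, ha, hb⟩ := hg j
  refine ⟨⟨_, _, i.succAbove_right_injective.ne hab, hmin a ha, hmin b hb⟩, i.succAbove a, ?_⟩
  rw [hi, hsa]
  exact hbig j a

/-- If every `4 × 4` submatrix of the `5 × n` real matrix `A` is tropically singular, then
for each `i` there is an `i`-coordinate hyperplane for the columns of `A`: a vector `h`
such that for every column `w` of `A`, the minimum of `h j + w j` is attained at least
twice and not at index `i`. -/
theorem exists_coordinate_hyperplane (n : ℕ) (A : Matrix (Fin 5) (Fin n) ℝ)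
    (hsing : ∀ (r : Fin 4 → Fin 5) (c : Fin 4 → Fin n),
      Function.Injective r → Function.Injective c → TropSingular (A.submatrix r c)) :
    ∀ i : Fin 5, ∃ h : Fin 5 → ℝ, ∀ col : Fin n,
      (∃ a b : Fin 5, a ≠ b ∧ a ∈ typeSet h (fun s => A s col) ∧
        b ∈ typeSet h (fun s => A s col)) ∧
      i ∉ typeSet h (fun s => A s col) := by
  intro i
  obtain ⟨g, hg⟩ := exists_tropHyperplane_of_forall_comp n (fun col k => A (i.succAbove k) col)
    fun c => by
      by_cases hc : Injective c
      · exact (hsing _ c Fin.succAbove_right_injective hc).transpose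
          |>.exists_forall_mem_tropHyperplane
      · obtain ⟨a, b, hcab, hab⟩ := not_injective_iff.mp hc
        exact exists_forall_mem_tropHyperplane_of_rows_eq (fun k l => A (i.succAbove l) (c k)) hab
          (by rw [hcab])
  obtain ⟨h, hh⟩ := exists_insertNth_tropHyperplane (fun col s => A s col) i g hg
  refine ⟨h, fun col => ⟨(hh col).1, fun hi => ?_⟩⟩
  obtain ⟨k, hk⟩ := (hh col).2
  exact (hi k).not_gt hk
end
end

section
/- Let a, b, c, d, e, f ∈ ℝ with a ≤ c. Set h^(1) = (0,0,0,0,0), h^(2) = (0,e,b,a,a), h^(4) = (0,c,c,f,d) in ℝ^5. Let ω ∈ ℝ^5 satisfy: type_{h^(1)}(ω) = {2,3}, type_{h^(4)}(ω) = {2,3}, |type_{h^(2)}(ω)| ≥ 2, and 2 ∉ type_{h^(2)}(ω). Then b > a. -/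
noncomputable section

/-- With `h⁽¹⁾ = (0,0,0,0,0)`, `h⁽²⁾ = (0,e,b,a,a)`, `h⁽⁴⁾ = (0,c,c,f,d)` and `a ≤ c`,
if `ω` has type `{2,3}` with respect to `h⁽¹⁾` and to `h⁽⁴⁾`, and its type with respect to
`h⁽²⁾` has at least two elements none of which is `2`, then `b > a`.
(Paper indices `{2,3}` correspond to the `Fin 5` indices `{1,2}`, and paper index `2` to
`(1 : Fin 5)`.) -/
theorem witness_forces_b_gt_a (a b c d e f : ℝ) (hac : a ≤ c) (ω : Fin 5 → ℝ)
    (h1 : typeSet ![0, 0, 0, 0, 0] ω = {1, 2})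
    (h4 : typeSet ![0, c, c, f, d] ω = {1, 2})
    (h2mem : ∃ i j : Fin 5, i ≠ j ∧ i ∈ typeSet ![0, e, b, a, a] ω ∧
      j ∈ typeSet ![0, e, b, a, a] ω)
    (h2not : (1 : Fin 5) ∉ typeSet ![0, e, b, a, a] ω) :
    b > a := by
  by_contra hba
  push_neg at hba
  obtain ⟨i, j, hij, hi, hj⟩ := h2mem
  -- membership facts from h1
  have A : (1 : Fin 5) ∈ typeSet ![0, 0, 0, 0, 0] ω := by rw [h1]; simp
  have A2 : (2 : Fin 5) ∈ typeSet ![0, 0, 0, 0, 0] ω := by rw [h1]; simp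
  have B3 : (3 : Fin 5) ∉ typeSet ![0, 0, 0, 0, 0] ω := by
    rw [h1]; simp [Set.mem_insert_iff]
  have B4 : (4 : Fin 5) ∉ typeSet ![0, 0, 0, 0, 0] ω := by
    rw [h1]; simp [Set.mem_insert_iff]
  have C0 : (0 : Fin 5) ∉ typeSet ![0, c, c, f, d] ω := by
    rw [h4]; simp [Set.mem_insert_iff]
  have C1 : (1 : Fin 5) ∈ typeSet ![0, c, c, f, d] ω := by rw [h4]; simp
  simp only [typeSet, Set.mem_setOf_eq, not_forall, not_le] at A A2 B3 B4 C0 C1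
  have a12 : ω 1 ≤ ω 2 := by have := A 2; simpa using this
  have a21 : ω 2 ≤ ω 1 := by have := A2 1; simpa using this
  have a13 : ω 1 < ω 3 := by
    obtain ⟨k, hk⟩ := B3
    have h1k := A k
    fin_cases k <;> simp_all <;> linarith
  have a14 : ω 1 < ω 4 := by
    obtain ⟨k, hk⟩ := B4
    have h1k := A k
    fin_cases k <;> simp_all <;> linarith
  have c0 : c + ω 1 < ω 0 := by
    obtain ⟨k, hk⟩ := C0
    have h1k := C1 k
    fin_cases k <;> simp_all <;> linarith
  -- now show any element of typeSet h2 (other than 1) must be 2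
  have key : ∀ k : Fin 5, k ∈ typeSet ![0, e, b, a, a] ω → k = 2 ∨ k = 1 := by
    intro k hk
    simp only [typeSet, Set.mem_setOf_eq] at hk
    fin_cases k
    · exfalso
      have := hk 2
      simp at this
      linarith
    · right; rfl
    · left; rfl
    · exfalso
      have := hk 2
      simp at this
      linarith
    · exfalso
      have := hk 2
      simp at this
      linarith
  rcases key i hi with hi2 | hi1
  · rcases key j hj with hj2 | hj1
    · exact hij (hi2.trans hj2.symm)
    · exact h2not (hj1 ▸ hj)
  · exact h2not (hi1 ▸ hi)
end
end

section
/- Let a, b, c, d, e, f ∈ ℝ with a ≤ c. Set h^(1) = (0,0,0,0,0), h^(2) = (0,e,b,a,a), h^(4) = (0,c,c,f,d) in ℝ^5. Let χ ∈ ℝ^5 satisfy: type_{h^(1)}(χ) = {4,5}, type_{h^(2)}(χ) = {4,5}, |type_{h^(4)}(χ)| ≥ 2, and 4 ∉ type_{h^(4)}(χ). Then d > a. -/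
noncomputable section

/-- With `h⁽¹⁾ = (0,0,0,0,0)`, `h⁽²⁾ = (0,e,b,a,a)`, `h⁽⁴⁾ = (0,c,c,f,d)` and `a ≤ c`,
if `χ` has type `{4,5}` with respect to `h⁽¹⁾` and to `h⁽²⁾`, and its type with respect to
`h⁽⁴⁾` has at least two elements none of which is `4`, then `d > a`.
(Paper indices `{4,5}` correspond to the `Fin 5` indices `{3,4}`, and paper index `4` to
`(3 : Fin 5)`.) -/
theorem witness_forces_d_gt_a (a b c d e f : ℝ) (hac : a ≤ c) (χ : Fin 5 → ℝ)
    (h1 : typeSet ![0, 0, 0, 0, 0] χ = {3, 4})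
    (h2 : typeSet ![0, e, b, a, a] χ = {3, 4})
    (h4mem : ∃ i j : Fin 5, i ≠ j ∧ i ∈ typeSet ![0, c, c, f, d] χ ∧
      j ∈ typeSet ![0, c, c, f, d] χ)
    (h4not : (3 : Fin 5) ∉ typeSet ![0, c, c, f, d] χ) :
    d > a := by
  by_contra hda
  push_neg at hda
  -- 4 is in both type sets
  have m1 : (4 : Fin 5) ∈ typeSet ![0, 0, 0, 0, 0] χ := by rw [h1]; right; rfl
  have m2 : (4 : Fin 5) ∈ typeSet ![0, e, b, a, a] χ := by rw [h2]; right; rfl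
  simp only [typeSet, Set.mem_setOf_eq] at m1 m2
  have min1 : ∀ j : Fin 5, χ 4 ≤ ![0, 0, 0, 0, 0] j + χ j := by
    intro j; have := m1 j; simpa using this
  have min2 : ∀ j : Fin 5, a + χ 4 ≤ ![0, e, b, a, a] j + χ j := by
    intro j; have := m2 j; simpa using this
  -- 1 and 2 are not in type set 1: χ 1 > χ 4, χ 2 > χ 4
  have strict1 : ∀ k : Fin 5, k ∉ ({3, 4} : Set (Fin 5)) → χ 4 < χ k := by
    intro k hk
    have hn : k ∉ typeSet ![0, 0, 0, 0, 0] χ := by rw [h1]; exact hk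
    simp only [typeSet, Set.mem_setOf_eq] at hn
    push_neg at hn
    obtain ⟨j, hj⟩ := hn
    have h4j := min1 j
    have hk4 : ![0, 0, 0, 0, 0] k + χ k = χ k := by fin_cases k <;> simp
    rw [hk4] at hj
    linarith
  have s1 : χ 4 < χ 1 := strict1 1 (by simp)
  have s2 : χ 4 < χ 2 := strict1 2 (by simp)
  -- 0 not in type set 2: χ 0 > a + χ 4
  have s0 : a + χ 4 < χ 0 := by
    have hn : (0 : Fin 5) ∉ typeSet ![0, e, b, a, a] χ := by rw [h2]; simp
    simp only [typeSet, Set.mem_setOf_eq] at hn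
    push_neg at hn
    obtain ⟨j, hj⟩ := hn
    have h4j := min2 j
    simp only [Matrix.cons_val_zero, zero_add] at hj
    linarith
  -- every element of the third type set must be 4
  have key : ∀ k : Fin 5, k ∈ typeSet ![0, c, c, f, d] χ → k = 4 := by
    intro k hk
    have h4 := hk 4
    fin_cases k
    · simp [typeSet, Matrix.vecHead, Matrix.vecTail] at h4
      linarith
    · simp [typeSet, Matrix.vecHead, Matrix.vecTail] at h4
      linarith
    · simp [typeSet, Matrix.vecHead, Matrix.vecTail] at h4
      linarith
    · exact absurd hk h4not
    · rfl
  obtain ⟨i, j, hij, hi, hj⟩ := h4mem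
  exact hij ((key i hi).trans (key j hj).symm)
end
end
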